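/- For every n ≥ 1 and every k ≥ 0, the number of permutations of [n] with exactly k exterior peaks equals the number of increasing trees on [n] having exactly 2k+1 vertices of even degree. -/
import Mathlib


/-- The number of exterior peaks of a word given as a list: indices `i` (1-based) with
`1 < i < n` and `l_{i-1} < l_i > l_{i+1}`, or `i = 1` and `l_1 > l_2`. -/
def extPeaksList {α : Type*} [LinearOrder α] (l : List α) : ℕ :=
  ((l.zip (l.tail.zip l.tail.tail)).countP
      fun p => decide (p.1 < p.2.1 ∧ p.2.2 < p.2.1)) +
    (match l with
     | a :: b :: _ => if b < a then 1 else 0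
     | _ => 0)

/-- The number of exterior peaks of a permutation of `[n]`. -/
def extPeaks {n : ℕ} (π : Equiv.Perm (Fin n)) : ℕ :=
  extPeaksList (List.ofFn fun i => (π i : ℕ))

/-- `deg p v` is the number of children of vertex `v` in the increasing tree on
`{0,1,…,n}` encoded by the parent function `p` (vertex `i+1` has parent `p i`). -/
def deg {n : ℕ} (p : Fin n → Fin (n + 1)) (v : Fin (n + 1)) : ℕ :=
  (Finset.univ.filter fun i => p i = v).card

/-- The parent function encodes an increasing tree: each vertex's parent has a smaller
label. -/
def IsIncreasingTree {n : ℕ} (p : Fin n → Fin (n + 1)) : Prop :=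
  ∀ i : Fin n, (p i : ℕ) ≤ (i : ℕ)

namespace S19


instance {n : ℕ} : DecidablePred (IsIncreasingTree (n := n)) := fun q => by
  unfold IsIncreasingTree; infer_instance

def ent (w : List ℕ) (i : ℕ) : ℕ := w.getD i 0

@[simp] lemma ent_cons_zero (a : ℕ) (l : List ℕ) : ent (a :: l) 0 = a := rfl
@[simp] lemma ent_cons_succ (a : ℕ) (l : List ℕ) (i : ℕ) : ent (a :: l) (i+1) = ent l i := rfl

def IsPk (w : List ℕ) (i : ℕ) : Prop :=
  i + 1 < w.length ∧ ent w (i+1) < ent w i ∧ (i = 0 ∨ ent w (i-1) < ent w i)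

instance (w : List ℕ) (i : ℕ) : Decidable (IsPk w i) := by unfold IsPk; infer_instance

def epk (w : List ℕ) : ℕ := ∑ i ∈ Finset.range w.length, if IsPk w i then 1 else 0

def cp (l : List ℕ) : ℕ :=
  (l.zip (l.tail.zip l.tail.tail)).countP fun p => decide (p.1 < p.2.1 ∧ p.2.2 < p.2.1)

lemma cp_cons (a : ℕ) (l : List ℕ) :
    cp (a :: l) = (match l with | b :: c :: _ => if a < b ∧ c < b then 1 else 0 | _ => 0)
      + cp l := by
  match l with
  | [] => rfl
  | [b] => rfl
  | b :: c :: t =>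
    simp only [cp, List.tail_cons, List.zip_cons_cons, List.countP_cons]
    rw [Nat.add_comm]
    congr 1
    by_cases h : a < b ∧ c < b <;> simp [h]

lemma isPk_cons_succ (a : ℕ) (l : List ℕ) (i : ℕ) (hi : 1 ≤ i) :
    IsPk (a :: l) (i+1) ↔ IsPk l i := by
  obtain ⟨j, rfl⟩ : ∃ j, i = j + 1 := ⟨i-1, by omega⟩
  show (j + 1 + 1 + 1 < l.length + 1) ∧ _ ∧ _ ↔ _
  unfold IsPk
  constructor
  · rintro ⟨h1, h2, h3⟩
    refine ⟨by omega, by simpa using h2, Or.inr ?_⟩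
    rcases h3 with h | h
    · omega
    · simpa using h
  · rintro ⟨h1, h2, h3⟩
    refine ⟨by omega, by simpa using h2, Or.inr ?_⟩
    rcases h3 with h | h
    · omega
    · simpa using h

lemma isPk_cons_one (a : ℕ) (l : List ℕ) :
    IsPk (a :: l) 1 ↔ (1 < l.length ∧ ent l 1 < ent l 0 ∧ a < ent l 0) := by
  unfold IsPk
  constructor
  · rintro ⟨h1, h2, h3⟩
    refine ⟨by simp at h1; omega, by simpa using h2, ?_⟩
    rcases h3 with h | h
    · omega
    · simpa using h
  · rintro ⟨h1, h2, h3⟩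
    exact ⟨by simp; omega, by simpa using h2, Or.inr (by simpa using h3)⟩

lemma cp_cons_eq (t : List ℕ) : ∀ a : ℕ,
    cp (a :: t) = ∑ i ∈ Finset.range t.length, if IsPk (a :: t) (i+1) then 1 else 0 := by
  induction t with
  | nil => intro a; rfl
  | cons b t' ih =>
    intro a
    rw [cp_cons, ih b]
    simp only [List.length_cons]
    rw [Finset.sum_range_succ' (fun i => if IsPk (a :: b :: t') (i+1) then 1 else 0)]
    have step : ∀ i ∈ Finset.range t'.length,
        (if IsPk (b :: t') (i+1) then 1 else 0)
          = (if IsPk (a :: b :: t') (i+1+1) then 1 else 0) := by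
      intro i _
      have h := isPk_cons_succ a (b :: t') (i+1) (by omega)
      simp only [h]
    rw [Finset.sum_congr rfl step, Nat.add_comm _ (∑ _ ∈ _, _)]
    congr 1
    · simp only [Nat.zero_add]
      match t' with
      | [] => rw [if_neg (fun h => by rw [isPk_cons_one] at h; simp at h)]
      | c :: t'' =>
        show (if a < b ∧ c < b then 1 else 0) = _
        by_cases h : a < b ∧ c < b
        · rw [if_pos h, if_pos (by rw [isPk_cons_one]; exact ⟨by simp, by simpa using h.2, h.1⟩)]
        · rw [if_neg h, if_neg (by rw [isPk_cons_one]; rintro ⟨-, h2, h3⟩; exact h ⟨h3, by simpa using h2⟩)]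

lemma isPk_zero (l : List ℕ) :
    IsPk l 0 ↔ (1 < l.length ∧ ent l 1 < ent l 0) := by
  unfold IsPk
  constructor
  · rintro ⟨h1, h2, -⟩; exact ⟨by omega, h2⟩
  · rintro ⟨h1, h2⟩; exact ⟨by omega, h2, Or.inl rfl⟩

lemma extPeaksList_eq_cp (l : List ℕ) :
    extPeaksList l = cp l + (if IsPk l 0 then 1 else 0) := by
  match l with
  | [] => rfl
  | [a] =>
    show 0 + 0 = 0 + _
    rw [if_neg (by rw [isPk_zero]; simp)]
  | a :: b :: t =>
    show cp (a :: b :: t) + (if b < a then 1 else 0) = _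
    congr 1
    by_cases h : b < a
    · rw [if_pos h, if_pos (by rw [isPk_zero]; exact ⟨by simp, by simpa using h⟩)]
    · rw [if_neg h, if_neg (by rw [isPk_zero]; rintro ⟨-, h2⟩; exact h (by simpa using h2))]

lemma extPeaksList_eq (l : List ℕ) : extPeaksList l = epk l := by
  rw [extPeaksList_eq_cp, epk]
  match l with
  | [] => rfl
  | a :: t =>
    rw [cp_cons_eq]
    simp only [List.length_cons]
    rw [Finset.sum_range_succ' (fun i => if IsPk (a :: t) i then 1 else 0)]

lemma isPk_lt {w : List ℕ} {i : ℕ} (h : IsPk w i) : i + 1 < w.length := h.1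

lemma not_isPk_adj (w : List ℕ) (i : ℕ) : ¬ (IsPk w i ∧ IsPk w (i+1)) := by
  rintro ⟨⟨-, h2, -⟩, ⟨-, -, h3⟩⟩
  rcases h3 with h | h
  · omega
  · simp only [Nat.add_sub_cancel] at h; omega

lemma ent_lt {w : List ℕ} {M : ℕ} (hM : ∀ x ∈ w, x < M) {i : ℕ} (hi : i < w.length) :
    ent w i < M := by
  rw [ent, List.getD_eq_getElem w 0 hi]
  exact hM _ (List.getElem_mem hi)

lemma ins (w w' : List ℕ) (M j : ℕ) (hM : ∀ x ∈ w, x < M) (hj : j ≤ w.length)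
    (hlen : w'.length = w.length + 1)
    (h1 : ∀ i, i < j → ent w' i = ent w i)
    (h2 : ent w' j = M)
    (h3 : ∀ i, j < i → ent w' i = ent w (i-1)) :
    epk w' + (if IsPk w j ∨ (1 ≤ j ∧ IsPk w (j-1)) then 1 else 0)
      = epk w + (if j < w.length then 1 else 0) := by
  have L1 : ∀ i, i + 1 < j → (IsPk w' i ↔ IsPk w i) := by
    intro i hi
    unfold IsPk
    rw [h1 _ (by omega), h1 _ (by omega), h1 _ (by omega), hlen]
    constructor <;> rintro ⟨c1, c2, c3⟩ <;> exact ⟨by omega, c2, c3⟩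
  have L2 : 1 ≤ j → ¬ IsPk w' (j-1) := by
    intro hj1 hpk
    obtain ⟨c1, c2, -⟩ := hpk
    rw [show j - 1 + 1 = j by omega, h2, h1 _ (by omega)] at c2
    have := ent_lt hM (show j - 1 < w.length by omega)
    omega
  have L3 : IsPk w' j ↔ j < w.length := by
    constructor
    · intro h; have := h.1; omega
    · intro hlt
      refine ⟨by omega, ?_, ?_⟩
      · rw [h3 (j+1) (by omega), h2, Nat.add_sub_cancel]
        exact ent_lt hM hlt
      · by_cases h0 : j = 0
        · exact Or.inl h0
        · exact Or.inr (by rw [h1 _ (by omega), h2]; exact ent_lt hM (by omega))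
  have L4 : ¬ IsPk w' (j+1) := by
    rintro ⟨c1, -, c3⟩
    rcases c3 with h | h
    · omega
    · rw [Nat.add_sub_cancel, h2, h3 _ (by omega)] at h
      rw [Nat.add_sub_cancel] at h
      have := ent_lt hM (show j < w.length by omega)
      omega
  have L5 : ∀ i, j + 2 ≤ i → (IsPk w' i ↔ IsPk w (i-1)) := by
    intro i hi
    unfold IsPk
    rw [h3 i (by omega), h3 (i+1) (by omega), h3 (i-1) (by omega), hlen,
      Nat.add_sub_cancel, show i - 1 + 1 = i by omega]
    constructor <;> rintro ⟨c1, c2, c3⟩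
    · refine ⟨by omega, c2, ?_⟩
      rcases c3 with h | h
      · omega
      · exact Or.inr h
    · refine ⟨by omega, c2, ?_⟩
      rcases c3 with h | h
      · omega
      · exact Or.inr h
  -- sum computation
  set f : ℕ → ℕ := fun i => if IsPk w' i then 1 else 0 with hf
  set g : ℕ → ℕ := fun i => if IsPk w i then 1 else 0 with hg
  have hjmem : j ∈ Finset.range (w.length + 1) := Finset.mem_range.2 (by omega)
  have key : epk w' = ∑ i ∈ Finset.range (w.length + 1) \ {j}, f i + f j := by
    rw [epk, hlen]
    exact Finset.sum_eq_sum_sdiff_singleton_add hjmem f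
  have key2 : ∑ i ∈ Finset.range (w.length + 1) \ {j}, f i
      = ∑ i ∈ Finset.range w.length, (if i + 1 = j ∨ i = j then 0 else g i) := by
    refine Finset.sum_bij' (fun a _ => if a < j then a else a - 1)
      (fun a _ => if a < j then a else a + 1) ?_ ?_ ?_ ?_ ?_
    · intro a ha
      simp only [Finset.mem_sdiff, Finset.mem_range, Finset.mem_singleton] at ha
      refine Finset.mem_range.2 ?_
      beta_reduce
      split_ifs <;> omega
    · intro a ha
      simp only [Finset.mem_range] at ha
      simp only [Finset.mem_sdiff, Finset.mem_range, Finset.mem_singleton]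
      beta_reduce
      split_ifs <;> constructor <;> omega
    · intro a ha
      simp only [Finset.mem_sdiff, Finset.mem_range, Finset.mem_singleton] at ha
      beta_reduce
      split_ifs <;> omega
    · intro a ha
      simp only [Finset.mem_range] at ha
      beta_reduce
      split_ifs <;> omega
    · intro a ha
      simp only [Finset.mem_sdiff, Finset.mem_range, Finset.mem_singleton] at ha
      beta_reduce
      by_cases h : a < j
      · rw [if_pos h]
        by_cases h2 : a + 1 = j
        · rw [if_pos (Or.inl h2)]
          simp only [hf]
          rw [if_neg (show ¬ IsPk w' a by
            have := L2 (by omega); rwa [show j - 1 = a by omega] at this)]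
        · rw [if_neg (by omega)]
          simp only [hf, hg]
          rw [if_congr (L1 a (by omega)) rfl rfl]
      · rw [if_neg h]
        by_cases h2 : a = j + 1
        · rw [if_pos (Or.inr (by omega))]
          simp only [hf]
          rw [if_neg (by rw [h2]; exact L4)]
        · rw [if_neg (by omega)]
          simp only [hf, hg]
          rw [if_congr (L5 a (by omega)) rfl rfl]
  have key3 : ∑ i ∈ Finset.range w.length, (if i + 1 = j ∨ i = j then 0 else g i)
      + ∑ i ∈ Finset.range w.length, (if i + 1 = j ∨ i = j then g i else 0)
      = epk w := by
    rw [← Finset.sum_add_distrib, epk]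
    refine Finset.sum_congr rfl fun i _ => ?_
    by_cases h : i + 1 = j ∨ i = j <;> simp [h, hg]
  have hDsum : ∑ i ∈ Finset.range w.length, (if i + 1 = j ∨ i = j then g i else 0)
      = (if 1 ≤ j ∧ IsPk w (j-1) then 1 else 0) + (if IsPk w j then 1 else 0) := by
    have split : ∀ i, (if i + 1 = j ∨ i = j then g i else 0)
        = (if i = j - 1 then (if 1 ≤ j then g i else 0) else 0) + (if i = j then g i else 0) := by
      intro i
      by_cases hc1 : i + 1 = j
      · rw [if_pos (Or.inl hc1), if_pos (by omega), if_pos (by omega),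
          if_neg (by omega)]
        omega
      · by_cases hc2 : i = j
        · rw [if_pos (Or.inr hc2), if_pos hc2]
          by_cases hc3 : i = j - 1
          · rw [if_pos hc3, if_neg (show ¬ 1 ≤ j by omega)]; omega
          · rw [if_neg hc3]; omega
        · rw [if_neg (by omega), if_neg (by omega), if_neg hc2]
    rw [Finset.sum_congr rfl (fun i _ => split i), Finset.sum_add_distrib,
      Finset.sum_ite_eq' _ (j-1) _, Finset.sum_ite_eq' _ j _]
    congr 1
    · by_cases hj1 : 1 ≤ j
      · rw [if_pos (Finset.mem_range.2 (by omega)), if_pos hj1]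
        simp only [hg]
        by_cases hp : IsPk w (j-1)
        · rw [if_pos hp, if_pos ⟨hj1, hp⟩]
        · rw [if_neg hp, if_neg (fun h => hp h.2)]
      · rw [if_neg hj1, ite_self, if_neg (fun h => hj1 h.1)]
    · by_cases hjl : j < w.length
      · rw [if_pos (Finset.mem_range.2 hjl)]
      · rw [if_neg (by simpa using hjl),
          if_neg (show ¬ IsPk w j from fun h => hjl (by have := h.1; omega))]
  have hfj : f j = (if j < w.length then 1 else 0) := by
    simp only [hf]
    rw [if_congr L3 rfl rfl]
  have excl : ¬ (IsPk w j ∧ (1 ≤ j ∧ IsPk w (j-1))) := by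
    rintro ⟨hA, hj1, hB⟩
    exact not_isPk_adj w (j-1) ⟨hB, by rwa [show j - 1 + 1 = j by omega]⟩
  have hor : (if IsPk w j ∨ (1 ≤ j ∧ IsPk w (j-1)) then (1:ℕ) else 0)
      = (if 1 ≤ j ∧ IsPk w (j-1) then 1 else 0) + (if IsPk w j then 1 else 0) := by
    by_cases hA : IsPk w j
    · rw [if_pos (Or.inl hA), if_pos hA, if_neg (fun h => excl ⟨hA, h⟩)]
    · by_cases hB : 1 ≤ j ∧ IsPk w (j-1)
      · rw [if_pos (Or.inr hB), if_pos hB, if_neg hA]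
      · rw [if_neg (by tauto), if_neg hB, if_neg hA]
  rw [key, key2, hor, hfj, ← key3, hDsum]
  ring

lemma countk (w : List ℕ) :
    ∑ j ∈ Finset.range (w.length + 1),
      (if (IsPk w j ∨ (1 ≤ j ∧ IsPk w (j-1))) ∨ j = w.length then 1 else 0)
      = 2 * epk w + 1 := by
  have point : ∀ j, (if (IsPk w j ∨ (1 ≤ j ∧ IsPk w (j-1))) ∨ j = w.length then (1:ℕ) else 0)
      = (if IsPk w j then 1 else 0) + ((if 1 ≤ j ∧ IsPk w (j-1) then 1 else 0)
        + (if j = w.length then 1 else 0)) := by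
    intro j
    by_cases hA : IsPk w j
    · have hnB : ¬(1 ≤ j ∧ IsPk w (j-1)) := fun hB =>
        not_isPk_adj w (j-1) ⟨hB.2, by rwa [show j-1+1 = j by omega]⟩
      have hnC : j ≠ w.length := by have := hA.1; omega
      simp [hA, hnB, hnC]
    · by_cases hB : 1 ≤ j ∧ IsPk w (j-1)
      · have hnC : j ≠ w.length := by have := hB.2.1; omega
        simp [hA, hB, hnC]
      · by_cases hC : j = w.length
        · subst hC; simp [hA, hB]
        · simp [hA, hB, hC]
  rw [Finset.sum_congr rfl (fun j _ => point j), Finset.sum_add_distrib,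
    Finset.sum_add_distrib]
  have s1 : ∑ j ∈ Finset.range (w.length + 1), (if IsPk w j then 1 else 0) = epk w := by
    rw [Finset.sum_range_succ, if_neg (show ¬ IsPk w w.length from fun h => by
      have := h.1; omega)]
    rfl
  have s2 : ∑ j ∈ Finset.range (w.length + 1), (if 1 ≤ j ∧ IsPk w (j-1) then 1 else 0)
      = epk w := by
    rw [Finset.sum_range_succ' (fun j => if 1 ≤ j ∧ IsPk w (j-1) then 1 else 0)]
    have : ∀ i ∈ Finset.range w.length,
        (if 1 ≤ i + 1 ∧ IsPk w (i+1-1) then (1:ℕ) else 0) = (if IsPk w i then 1 else 0) := by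
      intro i _
      simp only [Nat.add_sub_cancel]
      by_cases h : IsPk w i
      · rw [if_pos ⟨by omega, h⟩, if_pos h]
      · rw [if_neg (fun hh => h hh.2), if_neg h]
    rw [Finset.sum_congr rfl this, if_neg (by omega)]
    rfl
  have s3 : ∑ j ∈ Finset.range (w.length + 1), (if j = w.length then (1:ℕ) else 0) = 1 := by
    rw [Finset.sum_ite_eq' _ w.length (fun _ => (1:ℕ)),
      if_pos (Finset.mem_range.2 (by omega))]
  rw [s1, s2, s3]
  ring

def F (n : ℕ) (x : Equiv.Perm (Fin n) × Fin (n+1)) : Equiv.Perm (Fin (n+1)) :=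
  (finSuccEquiv' x.2).trans ((Equiv.optionCongr x.1).trans (finSuccEquiv' (Fin.last n)).symm)

lemma F_at (n : ℕ) (τ : Equiv.Perm (Fin n)) (j : Fin (n+1)) :
    F n (τ, j) j = Fin.last n := by
  simp [F]

lemma F_succAbove (n : ℕ) (τ : Equiv.Perm (Fin n)) (j : Fin (n+1)) (k : Fin n) :
    F n (τ, j) (j.succAbove k) = (τ k).castSucc := by
  simp [F, Fin.succAbove_last]

lemma F_eq_last_iff (n : ℕ) (τ : Equiv.Perm (Fin n)) (j : Fin (n+1)) (i : Fin (n+1)) :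
    F n (τ, j) i = Fin.last n ↔ i = j := by
  constructor
  · intro h
    by_contra hne
    obtain ⟨k, rfl⟩ := Fin.exists_succAbove_eq hne
    rw [F_succAbove] at h
    exact absurd h (Fin.ne_of_lt (Fin.castSucc_lt_last _))
  · rintro rfl; exact F_at n τ _

lemma F_bijective (n : ℕ) : Function.Bijective (F n) := by
  rw [Fintype.bijective_iff_injective_and_card]
  constructor
  · rintro ⟨τ, j⟩ ⟨τ', j'⟩ h
    have hj : j = j' := by
      have h1 : F n (τ', j') j = Fin.last n := by rw [← h]; exact F_at n τ j
      exact (F_eq_last_iff n τ' j' j).1 h1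
    subst hj
    have hτ : τ = τ' := by
      ext k
      have := congrArg (fun σ : Equiv.Perm (Fin (n+1)) => σ (j.succAbove k)) h
      simp only [F_succAbove] at this
      exact congrArg Fin.val (Fin.castSucc_injective _ this)
    rw [hτ]
  · simp [Fintype.card_perm, Nat.factorial_succ]
    ring

def wrd {n : ℕ} (σ : Equiv.Perm (Fin n)) : List ℕ := List.ofFn fun i => (σ i : ℕ)

lemma wrd_length {n : ℕ} (σ : Equiv.Perm (Fin n)) : (wrd σ).length = n := by
  simp [wrd]

lemma extPeaks_eq_epk {n : ℕ} (σ : Equiv.Perm (Fin n)) : extPeaks σ = epk (wrd σ) :=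
  extPeaksList_eq _

lemma ent_wrd {n : ℕ} (σ : Equiv.Perm (Fin n)) (i : ℕ) (h : i < n) :
    ent (wrd σ) i = (σ ⟨i, h⟩ : ℕ) := by
  rw [ent, wrd, List.getD_eq_getElem _ 0 (by simpa using h), List.getElem_ofFn]

lemma wrd_lt {n : ℕ} (σ : Equiv.Perm (Fin n)) : ∀ x ∈ wrd σ, x < n := by
  intro x hx
  rw [wrd, List.mem_ofFn] at hx
  obtain ⟨i, rfl⟩ := hx
  exact (σ i).is_lt

lemma hstat (n : ℕ) (τ : Equiv.Perm (Fin n)) (j : Fin (n+1)) :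
    extPeaks (F n (τ, j)) =
      if (IsPk (wrd τ) (j:ℕ) ∨ (1 ≤ (j:ℕ) ∧ IsPk (wrd τ) ((j:ℕ)-1))) ∨ (j:ℕ) = n
      then epk (wrd τ) else epk (wrd τ) + 1 := by
  set w := wrd τ with hwdef
  have hw : w.length = n := wrd_length τ
  have hjle : (j:ℕ) ≤ n := j.is_le
  have key := ins w (wrd (F n (τ, j))) n (j:ℕ) (by rw [hwdef]; exact wrd_lt τ)
    (by omega) (by rw [wrd_length, hw])
    (by
      intro i hi
      have hin : i < n := by omega
      rw [ent_wrd _ i (by omega), hwdef, ent_wrd τ i hin]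
      have : (⟨i, by omega⟩ : Fin (n+1)) = j.succAbove ⟨i, hin⟩ := by
        rw [Fin.succAbove_of_castSucc_lt]
        · rfl
        · simp [Fin.lt_def, hi]
      rw [this, F_succAbove]
      rfl)
    (by
      rw [ent_wrd _ (j:ℕ) (by omega)]
      have : (⟨(j:ℕ), by omega⟩ : Fin (n+1)) = j := by ext; rfl
      rw [this, F_at]
      rfl)
    (by
      intro i hi
      by_cases hle : i ≤ n
      · rw [ent_wrd _ i (by omega), hwdef, ent_wrd τ (i-1) (by omega)]
        have : (⟨i, by omega⟩ : Fin (n+1)) = j.succAbove ⟨i-1, by omega⟩ := by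
          rw [Fin.succAbove_of_le_castSucc]
          · ext; simp [Fin.succ]; omega
          · simp [Fin.le_def]; omega
        rw [this, F_succAbove]
        rfl
      · rw [ent, List.getD_eq_default _ _ (by rw [wrd_length]; omega),
          ent, List.getD_eq_default _ _ (by rw [hwdef, wrd_length]; omega)])
  rw [extPeaks_eq_epk] at *
  by_cases hK : IsPk w (j:ℕ) ∨ (1 ≤ (j:ℕ) ∧ IsPk w ((j:ℕ)-1))
  · rw [if_pos (Or.inl hK)]
    have hjn : (j:ℕ) < n := by
      rcases hK with h | ⟨h1, h⟩
      · have := h.1; omega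
      · have := h.1; omega
    rw [if_pos hK, if_pos (by omega : (j:ℕ) < w.length)] at key
    omega
  · by_cases hE : (j:ℕ) = n
    · rw [if_pos (Or.inr hE)]
      rw [if_neg hK, if_neg (show ¬ ((j:ℕ) < w.length) by omega)] at key
      omega
    · rw [if_neg (by tauto)]
      rw [if_neg hK, if_pos (show (j:ℕ) < w.length by omega)] at key
      omega

lemma cnt (n : ℕ) (τ : Equiv.Perm (Fin n)) (k : ℕ) :
    (Finset.univ.filter fun j : Fin (n+1) => extPeaks (F n (τ, j)) = k).card
    = if epk (wrd τ) = k then 2*k+1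
      else if epk (wrd τ) + 1 = k then (n+1) - (2 * epk (wrd τ) + 1) else 0 := by
  set w := wrd τ with hwdef
  have hw : w.length = n := wrd_length τ
  rw [Finset.card_filter]
  have hpt : ∀ j : Fin (n+1),
      (if extPeaks (F n (τ, j)) = k then (1:ℕ) else 0)
      = (fun m : ℕ => if (if (IsPk w m ∨ (1 ≤ m ∧ IsPk w (m-1))) ∨ m = n
          then epk w else epk w + 1) = k then (1:ℕ) else 0) (j : ℕ) := by
    intro j
    rw [hstat n τ j]
  rw [Finset.sum_congr rfl (fun j _ => hpt j),
    Fin.sum_univ_eq_sum_range (fun m : ℕ => if (if (IsPk w m ∨ (1 ≤ m ∧ IsPk w (m-1))) ∨ m = n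
          then epk w else epk w + 1) = k then (1:ℕ) else 0) (n+1)]
  have hck := countk w
  rw [hw] at hck
  by_cases h1 : epk w = k
  · rw [if_pos h1]
    have : ∀ m ∈ Finset.range (n+1),
        (if (if (IsPk w m ∨ (1 ≤ m ∧ IsPk w (m-1))) ∨ m = n then epk w else epk w + 1) = k
          then (1:ℕ) else 0)
        = (if (IsPk w m ∨ (1 ≤ m ∧ IsPk w (m-1))) ∨ m = n then 1 else 0) := by
      intro m _
      by_cases hc : (IsPk w m ∨ (1 ≤ m ∧ IsPk w (m-1))) ∨ m = n
      · rw [if_pos hc, if_pos hc, if_pos h1]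
      · rw [if_neg hc, if_neg hc, if_neg (by omega)]
    rw [Finset.sum_congr rfl this, hck]
    omega
  · by_cases h2 : epk w + 1 = k
    · rw [if_neg h1, if_pos h2]
      have key : (∑ m ∈ Finset.range (n+1), if (if (IsPk w m ∨ (1 ≤ m ∧ IsPk w (m-1))) ∨ m = n
            then epk w else epk w + 1) = k then (1:ℕ) else 0)
          + (∑ m ∈ Finset.range (n+1),
              if (IsPk w m ∨ (1 ≤ m ∧ IsPk w (m-1))) ∨ m = n then (1:ℕ) else 0)
          = n + 1 := by
        rw [← Finset.sum_add_distrib]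
        have : ∀ m ∈ Finset.range (n+1),
            ((if (if (IsPk w m ∨ (1 ≤ m ∧ IsPk w (m-1))) ∨ m = n
              then epk w else epk w + 1) = k then (1:ℕ) else 0)
            + (if (IsPk w m ∨ (1 ≤ m ∧ IsPk w (m-1))) ∨ m = n then (1:ℕ) else 0)) = 1 := by
          intro m _
          by_cases hc : (IsPk w m ∨ (1 ≤ m ∧ IsPk w (m-1))) ∨ m = n
          · rw [if_pos hc, if_pos hc, if_neg (by omega)]
          · rw [if_neg hc, if_neg hc, if_pos (by omega)]
        rw [Finset.sum_congr rfl this]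
        simp
      rw [hck] at key
      omega
    · rw [if_neg h1, if_neg h2]
      have : ∀ m ∈ Finset.range (n+1),
          (if (if (IsPk w m ∨ (1 ≤ m ∧ IsPk w (m-1))) ∨ m = n then epk w else epk w + 1) = k
            then (1:ℕ) else 0) = 0 := by
        intro m _
        by_cases hc : (IsPk w m ∨ (1 ≤ m ∧ IsPk w (m-1))) ∨ m = n
        · rw [if_pos hc, if_neg (by omega)]
        · rw [if_neg hc, if_neg (by omega)]
      rw [Finset.sum_congr rfl this]
      simp

def evens {n : ℕ} (q : Fin n → Fin (n+1)) : ℕ :=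
  (Finset.univ.filter fun v => Even (deg q v)).card

def G {n : ℕ} (q : Fin n → Fin (n+1)) (v : Fin (n+1)) : Fin (n+1) → Fin (n+2) :=
  fun i => Fin.lastCases v.castSucc (fun i' => (q i').castSucc) i

lemma G_castSucc {n : ℕ} (q : Fin n → Fin (n+1)) (v : Fin (n+1)) (i : Fin n) :
    G q v i.castSucc = (q i).castSucc := by
  rw [G, Fin.lastCases_castSucc]

lemma G_last {n : ℕ} (q : Fin n → Fin (n+1)) (v : Fin (n+1)) :
    G q v (Fin.last n) = v.castSucc := by
  rw [G, Fin.lastCases_last]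

lemma deg_G_castSucc {n : ℕ} (q : Fin n → Fin (n+1)) (v : Fin (n+1)) (u : Fin (n+1)) :
    deg (G q v) u.castSucc = deg q u + (if v = u then 1 else 0) := by
  rw [deg, Finset.card_filter, Fin.sum_univ_castSucc, deg, Finset.card_filter]
  congr 1
  · refine Finset.sum_congr rfl fun i _ => ?_
    rw [G_castSucc]
    exact if_congr (Fin.castSucc_inj) rfl rfl
  · rw [G_last]
    exact if_congr (Fin.castSucc_inj) rfl rfl

lemma deg_G_last {n : ℕ} (q : Fin n → Fin (n+1)) (v : Fin (n+1)) :
    deg (G q v) (Fin.last (n+1)) = 0 := by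
  rw [deg, Finset.card_eq_zero, Finset.filter_eq_empty_iff]
  intro i _
  induction i using Fin.lastCases with
  | last => rw [G_last]; exact Fin.ne_of_lt (Fin.castSucc_lt_last _)
  | cast i => rw [G_castSucc]; exact Fin.ne_of_lt (Fin.castSucc_lt_last _)

lemma evens_G {n : ℕ} (q : Fin n → Fin (n+1)) (v : Fin (n+1)) :
    evens (G q v) = evens q + (if Even (deg q v) then 0 else 2) := by
  rw [evens, Finset.card_filter, Fin.sum_univ_castSucc]
  have hlast : (if Even (deg (G q v) (Fin.last (n+1))) then (1:ℕ) else 0) = 1 := by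
    rw [deg_G_last]; simp
  rw [hlast]
  have hsum : ∀ u : Fin (n+1), u ∈ Finset.univ →
      (if Even (deg (G q v) u.castSucc) then (1:ℕ) else 0)
      = if Even (deg q u + if v = u then 1 else 0) then 1 else 0 := fun u _ => by
    rw [deg_G_castSucc]
  rw [Finset.sum_congr rfl hsum,
    Finset.sum_eq_sum_sdiff_singleton_add (Finset.mem_univ v)]
  have hrest : ∀ u ∈ Finset.univ \ {v},
      (if Even (deg q u + if v = u then 1 else 0) then (1:ℕ) else 0)
      = if Even (deg q u) then 1 else 0 := by
    intro u hu
    simp only [Finset.mem_sdiff, Finset.mem_univ, Finset.mem_singleton, true_and] at hu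
    rw [if_neg (show ¬ (v = u) from fun h => hu h.symm), Nat.add_zero]
  rw [Finset.sum_congr rfl hrest, if_pos rfl]
  have hq : evens q = (∑ u ∈ Finset.univ \ {v}, if Even (deg q u) then 1 else 0)
      + (if Even (deg q v) then 1 else 0) := by
    rw [evens, Finset.card_filter,
      Finset.sum_eq_sum_sdiff_singleton_add (Finset.mem_univ v)]
  by_cases h : Even (deg q v)
  · rw [if_neg (show ¬ Even (deg q v + 1) by simp [Nat.even_add_one, h]), hq,
      if_pos h, if_pos h]
  · rw [if_pos (show Even (deg q v + 1) by simp [Nat.even_add_one, h]), hq,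
      if_neg h, if_neg h]

def GS (n : ℕ) (x : {q : Fin n → Fin (n+1) // IsIncreasingTree q} × Fin (n+1)) :
    {p : Fin (n+1) → Fin (n+2) // IsIncreasingTree p} :=
  ⟨G x.1.1 x.2, by
    intro i
    induction i using Fin.lastCases with
    | last =>
      rw [G_last]
      simpa using x.2.is_le
    | cast i =>
      rw [G_castSucc]
      simpa using x.1.2 i⟩

lemma GS_bijective (n : ℕ) : Function.Bijective (GS n) := by
  constructor
  · rintro ⟨⟨q, hq⟩, v⟩ ⟨⟨q', hq'⟩, v'⟩ h
    have h' : G q v = G q' v' := congrArg Subtype.val h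
    have hv : v = v' := by
      have := congrFun h' (Fin.last n)
      rw [G_last, G_last] at this
      exact Fin.castSucc_injective _ this
    have hqq : q = q' := funext fun i => by
      have := congrFun h' i.castSucc
      rw [G_castSucc, G_castSucc] at this
      exact Fin.castSucc_injective _ this
    subst hv; subst hqq; rfl
  · rintro ⟨p, hp⟩
    have hlt : ∀ i : Fin n, (p i.castSucc : ℕ) < n + 1 := by
      intro i
      have := hp i.castSucc
      simp only [Fin.coe_castSucc] at this
      omega
    have hlast : (p (Fin.last n) : ℕ) < n + 1 := by
      have := hp (Fin.last n)
      simp only [Fin.val_last] at this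
      omega
    refine ⟨(⟨fun i => ⟨(p i.castSucc : ℕ), hlt i⟩, ?_⟩, ⟨(p (Fin.last n) : ℕ), hlast⟩), ?_⟩
    · intro i
      have := hp i.castSucc
      simpa using this
    · apply Subtype.ext
      funext i
      induction i using Fin.lastCases with
      | last =>
        show G _ _ (Fin.last n) = _
        rw [G_last]
        apply Fin.ext
        simp
      | cast i =>
        show G _ _ i.castSucc = _
        rw [G_castSucc]
        apply Fin.ext
        simp

lemma cntv (n : ℕ) (q : Fin n → Fin (n+1)) (m : ℕ) :
    (Finset.univ.filter fun v : Fin (n+1) => evens (G q v) = m).card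
    = (if evens q = m then evens q else 0)
      + (if evens q + 2 = m then (n+1) - evens q else 0) := by
  rw [Finset.card_filter]
  have hpt : ∀ v : Fin (n+1), v ∈ Finset.univ →
      (if evens (G q v) = m then (1:ℕ) else 0)
      = if (evens q + (if Even (deg q v) then 0 else 2)) = m then 1 else 0 := fun v _ => by
    rw [evens_G]
  rw [Finset.sum_congr rfl hpt]
  have hEsum : (∑ v : Fin (n+1), if Even (deg q v) then (1:ℕ) else 0) = evens q := by
    rw [evens, Finset.card_filter]
  by_cases h1 : evens q = m
  · rw [if_pos h1, if_neg (by omega)]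
    have : ∀ v : Fin (n+1), v ∈ Finset.univ →
        (if (evens q + (if Even (deg q v) then 0 else 2)) = m then (1:ℕ) else 0)
        = if Even (deg q v) then 1 else 0 := by
      intro v _
      by_cases hv : Even (deg q v)
      · rw [if_pos hv, if_pos hv, if_pos (by omega)]
      · rw [if_neg hv, if_neg hv, if_neg (by omega)]
    rw [Finset.sum_congr rfl this, hEsum]
    omega
  · by_cases h2 : evens q + 2 = m
    · rw [if_neg h1, if_pos h2]
      have key : (∑ v : Fin (n+1), if (evens q + (if Even (deg q v) then 0 else 2)) = m
            then (1:ℕ) else 0)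
          + (∑ v : Fin (n+1), if Even (deg q v) then (1:ℕ) else 0) = n + 1 := by
        rw [← Finset.sum_add_distrib]
        have : ∀ v : Fin (n+1), v ∈ Finset.univ →
            ((if (evens q + (if Even (deg q v) then 0 else 2)) = m then (1:ℕ) else 0)
              + (if Even (deg q v) then (1:ℕ) else 0)) = 1 := by
          intro v _
          by_cases hv : Even (deg q v)
          · rw [if_pos hv, if_pos hv, if_neg (by omega)]
          · rw [if_neg hv, if_neg hv, if_pos (by omega)]
        rw [Finset.sum_congr rfl this]
        simp
      rw [hEsum] at key
      have hle : evens q ≤ n + 1 := by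
        rw [evens]
        exact le_trans (Finset.card_filter_le _ _) (by simp)
      omega
    · rw [if_neg h1, if_neg h2]
      have : ∀ v : Fin (n+1), v ∈ Finset.univ →
          (if (evens q + (if Even (deg q v) then 0 else 2)) = m then (1:ℕ) else 0) = 0 := by
        intro v _
        by_cases hv : Even (deg q v)
        · rw [if_pos hv, if_neg (by omega)]
        · rw [if_neg hv, if_neg (by omega)]
      rw [Finset.sum_congr rfl this]
      simp


lemma GS_val (n : ℕ) (x : {q : Fin n → Fin (n+1) // IsIncreasingTree q} × Fin (n+1)) :
    (GS n x).val = G x.1.val x.2 := rfl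

-- Stage 5
lemma card_prod_fiber {A B : Type*} [Fintype A] [Fintype B] (Q : A × B → Prop)
    [DecidablePred Q] :
    Fintype.card {x : A × B // Q x}
      = ∑ a : A, (Finset.univ.filter fun b => Q (a, b)).card := by
  rw [Fintype.card_subtype, Finset.card_filter, ← Finset.univ_product_univ,
    Finset.sum_product]
  exact Finset.sum_congr rfl fun a _ => (Finset.card_filter _ _).symm

lemma card_congr_bij {A B : Type*} [Fintype A] [Fintype B] (f : A → B)
    (hf : Function.Bijective f) (P : B → Prop) [DecidablePred P] :
    Fintype.card {b : B // P b} = Fintype.card {a : A // P (f a)} :=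
  (Fintype.card_congr (Equiv.subtypeEquiv (Equiv.ofBijective f hf)
    (fun _ => Iff.rfl))).symm

lemma rec_P (n k : ℕ) :
    Fintype.card {σ : Equiv.Perm (Fin (n+1)) // extPeaks σ = k}
    = (2*k+1) * Fintype.card {τ : Equiv.Perm (Fin n) // extPeaks τ = k}
      + ((n+1) - (2*k-1)) * Fintype.card {τ : Equiv.Perm (Fin n) // extPeaks τ + 1 = k} := by
  rw [card_congr_bij (F n) (F_bijective n) (fun σ => extPeaks σ = k),
    card_prod_fiber (fun x => extPeaks (F n x) = k)]
  have hpt : ∀ τ : Equiv.Perm (Fin n), τ ∈ Finset.univ →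
      (Finset.univ.filter fun j : Fin (n+1) => extPeaks (F n (τ, j)) = k).card
      = (if extPeaks τ = k then 2*k+1 else 0)
        + (if extPeaks τ + 1 = k then (n+1) - (2*k-1) else 0) := by
    intro τ _
    rw [cnt n τ k, ← extPeaks_eq_epk τ]
    by_cases h1 : extPeaks τ = k
    · simp only [if_pos h1, if_neg (show ¬ (extPeaks τ + 1 = k) by omega)]
      try omega
    · by_cases h2 : extPeaks τ + 1 = k
      · simp only [if_neg h1, if_pos h2]
        have h3 : 2 * extPeaks τ + 1 = 2*k-1 := by omega
        rw [h3]
        try omega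
      · simp only [if_neg h1, if_neg h2]
        try omega
  rw [Finset.sum_congr rfl hpt, Finset.sum_add_distrib]
  congr 1
  · rw [← Finset.sum_filter, Finset.sum_const, smul_eq_mul, Fintype.card_subtype]
    ring
  · rw [← Finset.sum_filter, Finset.sum_const, smul_eq_mul, Fintype.card_subtype]
    ring

lemma rec_T (n k : ℕ) :
    Fintype.card {p : Fin (n+1) → Fin (n+2) // IsIncreasingTree p ∧ evens p = 2*k+1}
    = (2*k+1) * Fintype.card {q : Fin n → Fin (n+1) // IsIncreasingTree q ∧ evens q = 2*k+1}
      + ((n+1) - (2*k-1)) *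
        Fintype.card {q : Fin n → Fin (n+1) // IsIncreasingTree q ∧ evens q + 2 = 2*k+1} := by
  have e0 : Fintype.card {p : Fin (n+1) → Fin (n+2) // IsIncreasingTree p ∧ evens p = 2*k+1}
      = Fintype.card {y : {p : Fin (n+1) → Fin (n+2) // IsIncreasingTree p} //
          evens y.val = 2*k+1} :=
    Fintype.card_congr
      { toFun := fun x => ⟨⟨x.val, x.2.1⟩, x.2.2⟩
        invFun := fun y => ⟨y.val.val, y.val.2, y.2⟩
        left_inv := fun x => rfl
        right_inv := fun y => rfl }
  rw [e0, card_congr_bij (GS n) (GS_bijective n) (fun y => evens y.val = 2*k+1),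
    card_prod_fiber (fun x => evens (GS n x).val = 2*k+1)]
  have hpt : ∀ y : {q : Fin n → Fin (n+1) // IsIncreasingTree q}, y ∈ Finset.univ →
      (Finset.univ.filter fun v : Fin (n+1) => evens (GS n (y, v)).val = 2*k+1).card
      = (if evens y.val = 2*k+1 then 2*k+1 else 0)
        + (if evens y.val + 2 = 2*k+1 then (n+1) - (2*k-1) else 0) := by
    intro y _
    have hfe : (Finset.univ.filter fun v : Fin (n+1) => evens (GS n (y, v)).val = 2*k+1)
        = (Finset.univ.filter fun v : Fin (n+1) => evens (G y.val v) = 2*k+1) :=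
      Finset.filter_congr (fun v _ => by rw [GS_val n (y, v)])
    rw [hfe, cntv n y.val (2*k+1)]
    by_cases h1 : evens y.val = 2*k+1
    · simp only [if_pos h1, if_neg (show ¬ (evens y.val + 2 = 2*k+1) by omega)]
      try omega
    · by_cases h2 : evens y.val + 2 = 2*k+1
      · simp only [if_neg h1, if_pos h2]
        have h3 : evens y.val = 2*k-1 := by omega
        rw [h3]
      · simp only [if_neg h1, if_neg h2]
        try omega
  rw [Finset.sum_congr rfl hpt, Finset.sum_add_distrib]
  congr 1
  · rw [← Finset.sum_filter, Finset.sum_const, smul_eq_mul]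
    have : (Finset.univ.filter
        fun y : {q : Fin n → Fin (n+1) // IsIncreasingTree q} => evens y.val = 2*k+1).card
        = Fintype.card {q : Fin n → Fin (n+1) // IsIncreasingTree q ∧ evens q = 2*k+1} := by
      rw [← Fintype.card_subtype]
      exact Fintype.card_congr
        { toFun := fun y => ⟨y.val.val, y.val.2, y.2⟩
          invFun := fun x => ⟨⟨x.val, x.2.1⟩, x.2.2⟩
          left_inv := fun y => rfl
          right_inv := fun x => rfl }
    rw [this]
    ring
  · rw [← Finset.sum_filter, Finset.sum_const, smul_eq_mul]
    have : (Finset.univ.filter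
        fun y : {q : Fin n → Fin (n+1) // IsIncreasingTree q} => evens y.val + 2 = 2*k+1).card
        = Fintype.card {q : Fin n → Fin (n+1) // IsIncreasingTree q ∧ evens q + 2 = 2*k+1} := by
      rw [← Fintype.card_subtype]
      exact Fintype.card_congr
        { toFun := fun y => ⟨y.val.val, y.val.2, y.2⟩
          invFun := fun x => ⟨⟨x.val, x.2.1⟩, x.2.2⟩
          left_inv := fun y => rfl
          right_inv := fun x => rfl }
    rw [this]
    ring

lemma base_P (k : ℕ) :
    Fintype.card {σ : Equiv.Perm (Fin 0) // extPeaks σ = k} = if k = 0 then 1 else 0 := by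
  have hz : ∀ σ : Equiv.Perm (Fin 0), extPeaks σ = 0 := by
    intro σ
    show extPeaksList (List.ofFn fun i => ((σ i : Fin 0) : ℕ)) = 0
    rw [List.ofFn_zero]
    rfl
  rw [Fintype.card_subtype]
  by_cases hk : k = 0
  · rw [if_pos hk, Finset.filter_true_of_mem (fun σ _ => by rw [hz σ, hk]),
      Finset.card_univ]
    simp [Fintype.card_perm]
  · rw [if_neg hk, Finset.filter_false_of_mem (fun σ _ => by rw [hz σ]; omega),
      Finset.card_empty]

lemma base_T (k : ℕ) :
    Fintype.card {p : Fin 0 → Fin 1 // IsIncreasingTree p ∧ evens p = 2*k+1}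
      = if k = 0 then 1 else 0 := by
  have hIT : ∀ p : Fin 0 → Fin 1, IsIncreasingTree p := fun p i => i.elim0
  have hev : ∀ p : Fin 0 → Fin 1, evens p = 1 := by
    intro p
    rw [evens, Finset.filter_true_of_mem (fun v _ => by
      have : deg p v = 0 := by simp [deg]
      rw [this]
      exact Even.zero), Finset.card_univ]
    simp
  rw [Fintype.card_subtype]
  by_cases hk : k = 0
  · rw [if_pos hk, Finset.filter_true_of_mem (fun p _ => ⟨hIT p, by rw [hev p, hk]⟩),
      Finset.card_univ]
    simp
  · rw [if_neg hk, Finset.filter_false_of_mem (fun p _ h => by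
      have := h.2; rw [hev p] at this; omega), Finset.card_empty]

lemma main (n k : ℕ) :
    Fintype.card {σ : Equiv.Perm (Fin n) // extPeaks σ = k}
    = Fintype.card {p : Fin n → Fin (n+1) // IsIncreasingTree p ∧ evens p = 2*k+1} := by
  induction n generalizing k with
  | zero => rw [base_P, base_T]
  | succ n ih =>
    rw [rec_P n k, rec_T n k, ih k]
    congr 1
    congr 1
    cases k with
    | zero =>
      haveI h1 : IsEmpty {τ : Equiv.Perm (Fin n) // extPeaks τ + 1 = 0} :=
        ⟨fun x => by have := x.2; omega⟩
      haveI h2 : IsEmpty {q : Fin n → Fin (n+1) //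
          IsIncreasingTree q ∧ evens q + 2 = 2*0+1} :=
        ⟨fun x => by have := x.2.2; omega⟩
      rw [Fintype.card_eq_zero, Fintype.card_eq_zero]
    | succ k' =>
      have e1 : Fintype.card {τ : Equiv.Perm (Fin n) // extPeaks τ + 1 = k'+1}
          = Fintype.card {τ : Equiv.Perm (Fin n) // extPeaks τ = k'} :=
        Fintype.card_congr (Equiv.subtypeEquivRight (fun τ => by omega))
      have e2 : Fintype.card {q : Fin n → Fin (n+1) //
            IsIncreasingTree q ∧ evens q + 2 = 2*(k'+1)+1}
          = Fintype.card {q : Fin n → Fin (n+1) //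
            IsIncreasingTree q ∧ evens q = 2*k'+1} :=
        Fintype.card_congr (Equiv.subtypeEquivRight (fun q =>
          ⟨fun h => ⟨h.1, by omega⟩, fun h => ⟨h.1, by omega⟩⟩))
      rw [e1, e2, ih k']


end S19

/-- The number of permutations of `[n]` with exactly `k` exterior peaks equals the number
of increasing trees on `[n]` with exactly `2k+1` vertices of even degree. -/
theorem stmt19 (n k : ℕ) (hn : 1 ≤ n) :
    Nat.card {π : Equiv.Perm (Fin n) // extPeaks π = k} =
    Nat.card {p : Fin n → Fin (n + 1) //
      IsIncreasingTree p ∧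
        (Finset.univ.filter fun v => Even (deg p v)).card = 2 * k + 1} := by
  rw [Nat.card_eq_fintype_card, Nat.card_eq_fintype_card]
  exact S19.main n k
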